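/- Let t(λ) = h(λ)² - 2h'(λ) + 2(2X⁻(λ) + ξλ)X⁺(λ), where h'(λ) denotes the derivative in λ of h(λ). Then [t(λ), X⁺(μ)] = 4(h(λ)X⁺(μ) - h(μ)X⁺(λ))/(λ-μ) - 4ξλ X⁺(λ)X⁺(μ) for distinct λ, μ outside the sites. -/

import Mathlib

noncomputable section

/-- The current `h(λ) = Σ_a (h_a/(λ-z_a) + ξ z_a X⁺_a)`. -/
def hCur {A : Type*} [Ring A] [Algebra ℂ A] {N : ℕ} (z : Fin N → ℂ) (ξ : ℂ)
    (H Xp : Fin N → A) (l : ℂ) : A :=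
  ∑ a, ((l - z a)⁻¹ • H a + (ξ * z a) • Xp a)

/-- The current `X⁻(λ) = Σ_a (X⁻_a/(λ-z_a) - (ξ/2)λ h_a)`. -/
def XmCur {A : Type*} [Ring A] [Algebra ℂ A] {N : ℕ} (z : Fin N → ℂ) (ξ : ℂ)
    (H Xm : Fin N → A) (l : ℂ) : A :=
  ∑ a, ((l - z a)⁻¹ • Xm a - (ξ / 2 * l) • H a)

/-- The current `X⁺(λ) = Σ_a X⁺_a/(λ-z_a)`. -/
def XpCur {A : Type*} [Ring A] [Algebra ℂ A] {N : ℕ} (z : Fin N → ℂ)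
    (Xp : Fin N → A) (l : ℂ) : A :=
  ∑ a, (l - z a)⁻¹ • Xp a

/-- The λ-derivative `h'(λ) = -Σ_a h_a/(λ-z_a)²` of the current `h(λ)`. -/
def hdCur {A : Type*} [Ring A] [Algebra ℂ A] {N : ℕ} (z : Fin N → ℂ)
    (H : Fin N → A) (l : ℂ) : A :=
  ∑ a, (-((l - z a) ^ 2)⁻¹) • H a

/-- The generating function `t(λ) = h(λ)² - 2h'(λ) + 2(2X⁻(λ) + ξλ)X⁺(λ)`. -/
def tCur {A : Type*} [Ring A] [Algebra ℂ A] {N : ℕ} (z : Fin N → ℂ) (ξ : ℂ)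
    (H Xp Xm : Fin N → A) (l : ℂ) : A :=
  hCur z ξ H Xp l * hCur z ξ H Xp l - (2 : ℂ) • hdCur z H l +
    ((2 : ℂ) • ((2 : ℂ) • XmCur z ξ H Xm l + (ξ * l) • (1 : A))) * XpCur z Xp l

/-- The sl₂ relations at every site, and commutativity of generators at distinct sites. -/
def GaudinSites {A : Type*} [Ring A] [Algebra ℂ A] {N : ℕ}
    (H Xp Xm : Fin N → A) : Prop :=
  (∀ a, H a * Xp a - Xp a * H a = (2 : ℂ) • Xp a) ∧
  (∀ a, Xp a * Xm a - Xm a * Xp a = H a) ∧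
  (∀ a, H a * Xm a - Xm a * H a = (-2 : ℂ) • Xm a) ∧
  (∀ a b, a ≠ b → ∀ x ∈ ({H a, Xp a, Xm a} : Set A), ∀ y ∈ ({H b, Xp b, Xm b} : Set A),
    Commute x y)

attribute [local instance] LieRing.ofAssociativeRing

section Helpers

variable {A : Type*} [Ring A] [Algebra ℂ A] {N : ℕ}

private lemma lie_sum'' (x : A) (f : Fin N → A) :
    ⁅x, ∑ a, f a⁆ = ∑ a, ⁅x, f a⁆ := by
  simp only [Ring.lie_def, Finset.mul_sum, Finset.sum_mul, ← Finset.sum_sub_distrib]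

private lemma sum_lie'' (f : Fin N → A) (x : A) :
    ⁅∑ a, f a, x⁆ = ∑ a, ⁅f a, x⁆ := by
  simp only [Ring.lie_def, Finset.mul_sum, Finset.sum_mul, ← Finset.sum_sub_distrib]

private lemma smul_lie'' (c : ℂ) (x y : A) : ⁅c • x, y⁆ = c • ⁅x, y⁆ := by
  simp only [Ring.lie_def, smul_mul_assoc, mul_smul_comm, smul_sub]

private lemma lie_smul'' (c : ℂ) (x y : A) : ⁅x, c • y⁆ = c • ⁅x, y⁆ := by
  simp only [Ring.lie_def, smul_mul_assoc, mul_smul_comm, smul_sub]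

private lemma mul_lie'' (a b c : A) : ⁅a * b, c⁆ = a * ⁅b, c⁆ + ⁅a, c⁆ * b := by
  simp only [Ring.lie_def]; noncomm_ring

private lemma one_lie'' (x : A) : ⁅(1 : A), x⁆ = 0 := by
  simp only [Ring.lie_def, one_mul, mul_one, sub_self]

private lemma sum_lie_sum_ (f g : Fin N → ℂ) (G G' : Fin N → A)
    (hc : ∀ a b, a ≠ b → ⁅G a, G' b⁆ = 0) :
    ⁅∑ a, f a • G a, ∑ b, g b • G' b⁆ = ∑ a, (f a * g a) • ⁅G a, G' a⁆ := by
  rw [sum_lie'']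
  refine Finset.sum_congr rfl fun a _ => ?_
  rw [lie_sum'']
  simp only [smul_lie'', lie_smul'', smul_smul]
  rw [Finset.sum_eq_single a]
  · rw [mul_comm (g a) (f a)]
  · intro b _ hb
    rw [hc a b (Ne.symm hb), smul_zero]
  · exact fun h => absurd (Finset.mem_univ a) h

end Helpers

/-- `[t(λ), X⁺(μ)] = 4(h(λ)X⁺(μ) - h(μ)X⁺(λ))/(λ-μ) - 4ξλ X⁺(λ)X⁺(μ)`. -/
theorem tCur_XpCur_comm {A : Type*} [Ring A] [Algebra ℂ A] {N : ℕ} (z : Fin N → ℂ) (ξ : ℂ)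
    (H Xp Xm : Fin N → A) (hz : Function.Injective z) (hG : GaudinSites H Xp Xm)
    (l m : ℂ) (hl : l ∉ Set.range z) (hm : m ∉ Set.range z) (hlm : l ≠ m) :
    tCur z ξ H Xp Xm l * XpCur z Xp m - XpCur z Xp m * tCur z ξ H Xp Xm l =
      (4 * (l - m)⁻¹) • (hCur z ξ H Xp l * XpCur z Xp m - hCur z ξ H Xp m * XpCur z Xp l) -
        (4 * ξ * l) • (XpCur z Xp l * XpCur z Xp m) := by
  obtain ⟨h1, h2, h3, h4⟩ := hG
  have cHXp : ∀ a b, a ≠ b → ⁅H a, Xp b⁆ = 0 := fun a b hab => by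
    rw [Ring.lie_def, sub_eq_zero]
    exact (h4 a b hab (H a) (by simp) (Xp b) (by simp)).eq
  have cXpXp : ∀ a b, a ≠ b → ⁅Xp a, Xp b⁆ = 0 := fun a b hab => by
    rw [Ring.lie_def, sub_eq_zero]
    exact (h4 a b hab (Xp a) (by simp) (Xp b) (by simp)).eq
  have cXmXp : ∀ a b, a ≠ b → ⁅Xm a, Xp b⁆ = 0 := fun a b hab => by
    rw [Ring.lie_def, sub_eq_zero]
    exact (h4 a b hab (Xm a) (by simp) (Xp b) (by simp)).eq
  have dHXp : ∀ a, ⁅H a, Xp a⁆ = (2 : ℂ) • Xp a := fun a => h1 a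
  have dXmXp : ∀ a, ⁅Xm a, Xp a⁆ = -(H a) := fun a => by
    rw [Ring.lie_def, ← h2 a]
    exact (neg_sub _ _).symm
  have hlz : ∀ a, l - z a ≠ 0 := fun a h => hl ⟨a, (sub_eq_zero.mp h).symm⟩
  have hmz : ∀ a, m - z a ≠ 0 := fun a h => hm ⟨a, (sub_eq_zero.mp h).symm⟩
  have hlm' : l - m ≠ 0 := sub_ne_zero.mpr hlm
  have hCur_eq : ∀ u : ℂ, hCur z ξ H Xp u
      = (∑ a, (u - z a)⁻¹ • H a) + ∑ a, (ξ * z a) • Xp a := fun u => by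
    rw [hCur]; exact Finset.sum_add_distrib
  have xmCur_eq : XmCur z ξ H Xm l
      = (∑ a, (l - z a)⁻¹ • Xm a) - ∑ a, (ξ / 2 * l) • H a := by
    rw [XmCur]; exact Finset.sum_sub_distrib _ _
  -- raw commutators
  have Braw : ∀ u v : ℂ, ⁅hCur z ξ H Xp u, XpCur z Xp v⁆
      = ∑ a, (2 * ((u - z a)⁻¹ * (v - z a)⁻¹)) • Xp a := by
    intro u v
    rw [hCur_eq, XpCur, add_lie, sum_lie_sum_ _ _ _ _ cHXp, sum_lie_sum_ _ _ _ _ cXpXp]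
    simp only [lie_self, smul_zero, Finset.sum_const_zero, add_zero]
    refine Finset.sum_congr rfl fun a _ => ?_
    rw [dHXp, smul_smul]
    congr 1; ring
  have Praw : ∀ u v : ℂ, ⁅XpCur z Xp u, XpCur z Xp v⁆ = 0 := by
    intro u v
    rw [XpCur, XpCur, sum_lie_sum_ _ _ _ _ cXpXp]
    simp only [lie_self, smul_zero, Finset.sum_const_zero]
  have Craw : ⁅XmCur z ξ H Xm l, XpCur z Xp m⁆
      = ∑ a, ((-((l - z a)⁻¹ * (m - z a)⁻¹)) • H a + (-(ξ * l * (m - z a)⁻¹)) • Xp a) := by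
    rw [xmCur_eq, XpCur, sub_lie, sum_lie_sum_ _ _ _ _ cXmXp, sum_lie_sum_ _ _ _ _ cHXp,
      sub_eq_add_neg, ← Finset.sum_neg_distrib, ← Finset.sum_add_distrib]
    refine Finset.sum_congr rfl fun a _ => ?_
    rw [dXmXp, dHXp, smul_smul, smul_neg, ← neg_smul, ← neg_smul]
    congr 2
    ring
  have Draw : ⁅hdCur z H l, XpCur z Xp m⁆
      = ∑ a, (-2 * (((l - z a) ^ 2)⁻¹ * (m - z a)⁻¹)) • Xp a := by
    rw [hdCur, XpCur, sum_lie_sum_ _ _ _ _ cHXp]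
    refine Finset.sum_congr rfl fun a _ => ?_
    rw [dHXp, smul_smul]
    congr 1; ring
  -- current-form commutators
  have Bval : ⁅hCur z ξ H Xp l, XpCur z Xp m⁆
      = (2 * (l - m)⁻¹) • (XpCur z Xp m - XpCur z Xp l) := by
    rw [Braw l m, XpCur, XpCur, ← Finset.sum_sub_distrib, Finset.smul_sum]
    refine Finset.sum_congr rfl fun a _ => ?_
    rw [← sub_smul, smul_smul]
    congr 1
    have e1 := hlz a; have e2 := hmz a
    field_simp
    ring
  have Dval : ⁅hdCur z H l, XpCur z Xp m⁆
      = (l - m)⁻¹ • (⁅hCur z ξ H Xp l, XpCur z Xp l⁆ - ⁅hCur z ξ H Xp l, XpCur z Xp m⁆) := by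
    rw [Draw, Braw l l, Braw l m, ← Finset.sum_sub_distrib, Finset.smul_sum]
    refine Finset.sum_congr rfl fun a _ => ?_
    rw [← sub_smul, smul_smul]
    congr 1
    have e1 := hlz a; have e2 := hmz a
    field_simp
    ring
  have hdiff : hCur z ξ H Xp l - hCur z ξ H Xp m
      = ∑ a, ((l - z a)⁻¹ - (m - z a)⁻¹) • H a := by
    rw [hCur_eq, hCur_eq, add_sub_add_right_eq_sub, ← Finset.sum_sub_distrib]
    refine Finset.sum_congr rfl fun a _ => ?_
    rw [sub_smul]
  have Cval : ⁅XmCur z ξ H Xm l, XpCur z Xp m⁆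
      = (l - m)⁻¹ • (hCur z ξ H Xp l - hCur z ξ H Xp m) - (ξ * l) • XpCur z Xp m := by
    rw [Craw, hdiff, XpCur, Finset.smul_sum, Finset.smul_sum, sub_eq_add_neg,
      ← Finset.sum_neg_distrib, ← Finset.sum_add_distrib]
    refine Finset.sum_congr rfl fun a _ => ?_
    rw [smul_smul, smul_smul]
    have e1 := hlz a; have e2 := hmz a
    rw [show (-((l - z a)⁻¹ * (m - z a)⁻¹)) = (l - m)⁻¹ * ((l - z a)⁻¹ - (m - z a)⁻¹) from by
      field_simp; ring]
    rw [← neg_smul]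
  have comm_pp : XpCur z Xp m * XpCur z Xp l = XpCur z Xp l * XpCur z Xp m := by
    have := Praw m l
    rw [Ring.lie_def, sub_eq_zero] at this
    exact this
  have comm_hB : XpCur z Xp m * hCur z ξ H Xp l
      = hCur z ξ H Xp l * XpCur z Xp m - (2 * (l - m)⁻¹) • (XpCur z Xp m - XpCur z Xp l) := by
    rw [← Bval, Ring.lie_def]
    abel
  have main : ⁅tCur z ξ H Xp Xm l, XpCur z Xp m⁆
      = (4 * (l - m)⁻¹) • (hCur z ξ H Xp l * XpCur z Xp m - hCur z ξ H Xp m * XpCur z Xp l) -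
        (4 * ξ * l) • (XpCur z Xp l * XpCur z Xp m) := by
    simp only [tCur, add_lie, sub_lie, mul_lie'', smul_lie'', one_lie'', smul_zero,
      Praw, mul_zero, add_zero, zero_add]
    simp only [Dval, Bval, Cval]
    simp only [Ring.lie_def]
    simp only [smul_zero, mul_zero, zero_mul, add_zero, zero_add, smul_sub, smul_add,
      smul_smul, sub_mul, mul_sub, add_mul, mul_add, smul_mul_assoc, mul_smul_comm]
    rw [comm_pp, comm_hB]
    simp only [smul_sub, smul_smul, mul_sub, sub_mul]
    module
  exact main

end
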